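/- arXiv:2005.00266 — 10 statements merged into one kernel-verified Lean document; each statement's English description precedes it below -/
import Mathlib

section
/- Let A be a set with a (k+1)-ary near unanimity operation n, and let R ⊆ A^r (r > k) be a subset closed under coordinatewise application of n. If a tuple a ∈ A^r has the property that for every k-element set I of coordinates there exists b ∈ R agreeing with a on I, then a ∈ R. (Baker–Pixley style determination of relations by k-fold projections.) -/
/-- Baker–Pixley: a relation closed under a `(k+1)`-ary near unanimity operation is
determined by its projections onto `k`-element sets of coordinates. -/
theorem stmt_2 {A : Type*} {k r : ℕ} (hr : k < r)
    (n : (Fin (k + 1) → A) → A)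
    (hn : ∀ (a b : A) (i : Fin (k + 1)), n (fun j => if j = i then b else a) = a)
    (R : Set (Fin r → A))
    (hclosed : ∀ ts : Fin (k + 1) → (Fin r → A), (∀ i, ts i ∈ R) →
      (fun c => n (fun i => ts i c)) ∈ R)
    (a : Fin r → A)
    (ha : ∀ I : Finset (Fin r), I.card = k → ∃ b ∈ R, ∀ i ∈ I, b i = a i) :
    a ∈ R := by
  have key : ∀ t : ℕ, ∀ S : Finset (Fin r), S.card = k + t →
      ∃ b ∈ R, ∀ i ∈ S, b i = a i := by
    intro t
    induction t with
    | zero => intro S hS; exact ha S hS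
    | succ t ih =>
      intro S hS
      -- pick k+1 distinct elements of S
      obtain ⟨T, hTS, hT⟩ := Finset.exists_subset_card_eq
        (show k + 1 ≤ S.card by omega)
      let e : Fin (k + 1) ≃o {x // x ∈ T} := T.orderIsoOfFin hT
      have heS : ∀ j, (e j : Fin r) ∈ S := fun j => hTS (e j).2
      have heinj : ∀ {j l : Fin (k+1)}, (e j : Fin r) = e l → j = l := by
        intro j l h
        exact e.injective (Subtype.ext h)
      -- for each j, get b_j ∈ R agreeing with a on S \ {e j}
      have hbj : ∀ j : Fin (k + 1), ∃ b ∈ R, ∀ i ∈ S.erase (e j), b i = a i := by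
        intro j
        apply ih
        rw [Finset.card_erase_of_mem (heS j), hS]; omega
      choose b hbR hba using hbj
      refine ⟨fun c => n (fun j => b j c), hclosed b hbR, ?_⟩
      intro c hc
      by_cases hex : ∃ j, (e j : Fin r) = c
      · obtain ⟨j, hj⟩ := hex
        have : (fun l => b l c) = fun l => if l = j then b j c else a c := by
          funext l
          by_cases hl : l = j
          · simp [hl]
          · rw [if_neg hl]
            apply hba l c
            refine Finset.mem_erase.mpr ⟨?_, hc⟩
            intro h
            exact hl (heinj (hj.trans h)).symm
        show n (fun l => b l c) = a c
        rw [this, hn]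
      · have hblc : ∀ l, b l c = a c := fun l =>
          hba l c (Finset.mem_erase.mpr ⟨fun h => hex ⟨l, h.symm⟩, hc⟩)
        have : (fun l => b l c) = fun l => if l = (0 : Fin (k+1)) then a c else a c := by
          funext l
          rw [hblc]
          split <;> rfl
        show n (fun l => b l c) = a c
        rw [this, hn]
  obtain ⟨b, hbR, hba⟩ := key (r - k) Finset.univ (by simp; omega)
  have : b = a := funext fun i => hba i (Finset.mem_univ i)
  exact this ▸ hbR
end

section
/- Let A be a set, R and S binary relations on A, and suppose R locally n-absorbs S via operations that are idempotent and preserve R. Let (a₁, ..., a_n) and (b₁, ..., b_n) be directed walks in R (i.e., (aᵢ, a_{i+1}) ∈ R and (bᵢ, b_{i+1}) ∈ R for all i < n), and suppose (aᵢ, bᵢ) ∈ S for each i. Then there exists a directed walk from a₁ to b_n of length n in R. -/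
/-- If `R` locally `n`-absorbs `S` via idempotent operations preserving `R`, and
`(a₁,…,aₙ)`, `(b₁,…,bₙ)` are directed walks in `R` with `(aᵢ,bᵢ) ∈ S`, then there is a
directed walk of length `n` in `R` from `a₁` to `bₙ`. -/
theorem stmt_7 {A : Type*} (n : ℕ) (hn : 1 ≤ n) (R S : Set (A × A))
    (habs : ∀ C : Set (Fin n → A × A), C.Finite →
      (∀ c ∈ C, ∃ i : Fin n, c i ∈ S ∧ ∀ j : Fin n, j ≠ i → c j ∈ R) →
      ∃ t : (Fin n → A) → A,
        (∀ a : A, t (fun _ => a) = a) ∧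
        (∀ ab : Fin n → A × A, (∀ i, ab i ∈ R) →
          (t (fun i => (ab i).1), t (fun i => (ab i).2)) ∈ R) ∧
        (∀ c ∈ C, (t (fun i => (c i).1), t (fun i => (c i).2)) ∈ R))
    (a b : ℕ → A)
    (hwa : ∀ i : ℕ, i + 1 < n → (a i, a (i + 1)) ∈ R)
    (hwb : ∀ i : ℕ, i + 1 < n → (b i, b (i + 1)) ∈ R)
    (hS : ∀ i < n, (a i, b i) ∈ S) :
    ∃ w : ℕ → A, w 0 = a 0 ∧ w n = b (n - 1) ∧ ∀ i < n, (w i, w (i + 1)) ∈ R := by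
  classical
  -- coordinate i's position at time k
  set p : Fin n → ℕ → A := fun i k => if k ≤ i.val then a k else b (k - 1) with hp
  set c : Fin n → Fin n → A × A := fun k i => (p i k.val, p i (k.val + 1)) with hc
  have goodC : ∀ c0 ∈ Set.range c, ∃ i : Fin n, c0 i ∈ S ∧ ∀ j : Fin n, j ≠ i → c0 j ∈ R := by
    rintro c0 ⟨k, rfl⟩
    refine ⟨k, ?_, ?_⟩
    · have h1 : p k k.val = a k.val := by simp [hp]
      have h2 : p k (k.val + 1) = b k.val := by simp [hp]
      simp only [hc, h1, h2]
      exact hS k.val k.isLt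
    · intro j hj
      rcases lt_or_gt_of_ne (fun h => hj (Fin.ext h)) with hlt | hgt
      · -- j.val < k.val : pairs on the b-walk
        have h1 : p j k.val = b (k.val - 1) := by
          simp only [hp]; rw [if_neg (by omega)]
        have h2 : p j (k.val + 1) = b k.val := by
          simp only [hp]; rw [if_neg (by omega), Nat.add_sub_cancel]
        simp only [hc, h1, h2]
        have := hwb (k.val - 1) (by omega)
        have hk1 : k.val - 1 + 1 = k.val := by omega
        rwa [hk1] at this
      · -- k.val < j.val : pairs on the a-walk
        have h1 : p j k.val = a k.val := by
          simp only [hp]; rw [if_pos (by omega)]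
        have h2 : p j (k.val + 1) = a (k.val + 1) := by
          simp only [hp]; rw [if_pos (by omega)]
        simp only [hc, h1, h2]
        exact hwa k.val (by omega)
  obtain ⟨t, hid, -, ht⟩ := habs (Set.range c) (Set.finite_range c) goodC
  · refine ⟨fun k => t (fun i => p i k), ?_, ?_, ?_⟩
    · have h0 : (fun i : Fin n => p i 0) = fun _ => a 0 := by
        funext i; simp [hp]
      show t (fun i => p i 0) = a 0
      rw [h0, hid]
    · have hN : (fun i : Fin n => p i n) = fun _ => b (n - 1) := by
        funext i; simp only [hp]; rw [if_neg (by omega)]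
      show t (fun i => p i n) = b (n - 1)
      rw [hN, hid]
    · intro k hk
      have := ht (c ⟨k, hk⟩) ⟨⟨k, hk⟩, rfl⟩
      simpa only [hc] using this
end

section
/- Let A be an idempotent algebra and R ≤ A² a subalgebra viewed as a binary relation. If R locally n-absorbs the equality relation on A and R contains a directed walk of length n−1, then R contains directed walks between appropriate endpoints of every length ≥ n−1; in particular, if R furthermore contains a directed closed walk, then R contains directed closed walks of every sufficiently large length. -/
/-!
Given a walk `w` of length at least `n - 1`, consider `n` walkers moving along `w` in lockstep,
walker `i` pausing for one step at time `i`. At each time exactly one walker pauses and the others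
take an `R`-step, so a term operation absorbing these finitely many `n`-tuples of pairs maps the
`n + 1` positions of the walkers to an `R`-walk of length `n`. It starts at `w 0` and ends at
`w (n - 1)` by idempotence, so it replaces the first `n - 1` steps of `w` by `n` steps. Iterating
stretches any long enough walk to every larger length with the same endpoints; applied to a
closed walk wound around itself `n` times this gives closed walks of all large lengths.
-/

section WalkStretching

variable {A : Type*} {R : Set (A × A)} {n m : ℕ} {w : ℕ → A}

def LocallyAbsorbsEq (n : ℕ) (R : Set (A × A)) : Prop :=
  ∀ C : Set (Fin n → A × A), C.Finite →
    (∀ c ∈ C, ∃ i : Fin n, (c i).1 = (c i).2 ∧ ∀ j : Fin n, j ≠ i → c j ∈ R) →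
    ∃ t : (Fin n → A) → A, (∀ a : A, t (fun _ => a) = a) ∧
      ∀ c ∈ C, (t (fun i => (c i).1), t (fun i => (c i).2)) ∈ R

def IsWalk (R : Set (A × A)) (w : ℕ → A) (m : ℕ) : Prop :=
  ∀ i < m, (w i, w (i + 1)) ∈ R

theorem IsWalk.mono {k : ℕ} (hw : IsWalk R w m) (hk : k ≤ m) : IsWalk R w k :=
  fun i hi => hw i (by omega)

theorem IsWalk.mod_of_closed {p : ℕ} (hp : 0 < p) (hclosed : w p = w 0) (hw : IsWalk R w p)
    (m : ℕ) : IsWalk R (fun i => w (i % p)) m := by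
  intro i _
  have hlt : i % p < p := Nat.mod_lt i hp
  have hsucc : w ((i + 1) % p) = w (i % p + 1) := by
    rw [← Nat.mod_add_mod]
    rcases Nat.lt_or_ge (i % p + 1) p with h | h
    · rw [Nat.mod_eq_of_lt h]
    · rw [show i % p + 1 = p by omega, Nat.mod_self, hclosed]
  simpa only [hsucc] using hw _ hlt

/-- Positions at time `k` of the `n` walkers along `w`, walker `i` pausing at time `i`. -/
def stair (w : ℕ → A) (k : ℕ) : Fin n → A :=
  fun i => if (i : ℕ) < k then w (k - 1) else w k

theorem stair_zero (w : ℕ → A) : stair (n := n) w 0 = fun _ => w 0 := by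
  funext i
  exact if_neg (Nat.not_lt_zero _)

theorem stair_self (w : ℕ → A) : stair (n := n) w n = fun _ => w (n - 1) := by
  funext i
  exact if_pos i.isLt

theorem stair_step (hw : IsWalk R w (n - 1)) {k : ℕ} (hk : k < n) :
    ∃ i : Fin n, stair w k i = stair w (k + 1) i ∧
      ∀ j : Fin n, j ≠ i → (stair w k j, stair w (k + 1) j) ∈ R := by
  refine ⟨⟨k, hk⟩, by simp [stair], fun j hj => ?_⟩
  have hjk : (j : ℕ) ≠ k := fun h => hj (Fin.ext h)
  rcases Nat.lt_or_gt_of_ne hjk with h | h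
  · simp only [stair, if_pos h, if_pos (Nat.lt_succ_of_lt h), Nat.add_sub_cancel]
    simpa [Nat.sub_add_cancel (show 1 ≤ k by omega)] using hw (k - 1) (by omega)
  · simp only [stair, if_neg (show ¬ (j : ℕ) < k by omega),
      if_neg (show ¬ (j : ℕ) < k + 1 by omega)]
    exact hw k (by omega)

theorem IsWalk.exists_succ (hR : LocallyAbsorbsEq n R) (hn : 0 < n) (hm : n - 1 ≤ m)
    (hw : IsWalk R w m) :
    ∃ w' : ℕ → A, w' 0 = w 0 ∧ w' (m + 1) = w m ∧ IsWalk R w' (m + 1) := by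
  obtain ⟨t, ht_idem, ht⟩ :=
    hR (Set.range fun k : Fin n => fun i => (stair w k i, stair w (k + 1) i))
      (Set.finite_range _) (by rintro _ ⟨k, rfl⟩; exact stair_step (hw.mono hm) k.isLt)
  have ht_zero : t (stair w 0) = w 0 := by rw [stair_zero, ht_idem]
  have ht_self : t (stair w n) = w (n - 1) := by rw [stair_self, ht_idem]
  refine ⟨fun j => if j ≤ n then t (stair w j) else w (j - 1), by simp [ht_zero], ?_, ?_⟩
  · rcases Nat.lt_or_ge n (m + 1) with h | h
    · simp [show ¬ m + 1 ≤ n by omega]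
    · obtain rfl : m = n - 1 := by omega
      simp [Nat.sub_add_cancel hn, ht_self]
  · intro i hi
    rcases Nat.lt_or_ge i n with h | h
    · simpa [h.le, Nat.succ_le_of_lt h] using ht _ ⟨⟨i, h⟩, rfl⟩
    · rcases h.eq_or_lt with rfl | h
      · simpa [ht_self, Nat.sub_add_cancel hn] using hw (n - 1) (by omega)
      · simpa [show ¬ i ≤ n by omega, show ¬ i + 1 ≤ n by omega,
          Nat.sub_add_cancel (show 1 ≤ i by omega)] using hw (i - 1) (by omega)

theorem IsWalk.exists_of_le (hR : LocallyAbsorbsEq n R) (hn : 0 < n) (hm : n - 1 ≤ m)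
    (hw : IsWalk R w m) {m' : ℕ} (hm' : m ≤ m') :
    ∃ w' : ℕ → A, w' 0 = w 0 ∧ w' m' = w m ∧ IsWalk R w' m' := by
  induction m', hm' using Nat.le_induction with
  | base => exact ⟨w, rfl, rfl, hw⟩
  | succ k hk ih =>
    obtain ⟨w', hw'0, hw'k, hw'⟩ := ih
    obtain ⟨w'', hw''0, hw''k, hw''⟩ := hw'.exists_succ hR hn (by omega)
    exact ⟨w'', hw''0.trans hw'0, hw''k.trans hw'k, hw''⟩

end WalkStretching

/-- If `R` locally `n`-absorbs equality (via idempotent operations preserving `R`) and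
contains a directed walk of length `n-1`, then directed walks from its starting point
exist in every length `≥ n-1`; if moreover `R` has a directed closed walk, it has
directed closed walks of every sufficiently large length. -/
theorem stmt_8 {A : Type*} (n : ℕ) (hn : 2 ≤ n) (R : Set (A × A))
    (habs : ∀ C : Set (Fin n → A × A), C.Finite →
      (∀ c ∈ C, ∃ i : Fin n, (c i).1 = (c i).2 ∧ ∀ j : Fin n, j ≠ i → c j ∈ R) →
      ∃ t : (Fin n → A) → A,
        (∀ a : A, t (fun _ => a) = a) ∧
        (∀ ab : Fin n → A × A, (∀ i, ab i ∈ R) →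
          (t (fun i => (ab i).1), t (fun i => (ab i).2)) ∈ R) ∧
        (∀ c ∈ C, (t (fun i => (c i).1), t (fun i => (c i).2)) ∈ R))
    (a : ℕ → A)
    (hwa : ∀ i : ℕ, i + 1 < n → (a i, a (i + 1)) ∈ R) :
    (∀ m : ℕ, n - 1 ≤ m →
      ∃ w : ℕ → A, w 0 = a 0 ∧ ∀ i < m, (w i, w (i + 1)) ∈ R) ∧
    ((∃ (c : ℕ → A) (p : ℕ), 1 ≤ p ∧ c p = c 0 ∧ ∀ i < p, (c i, c (i + 1)) ∈ R) →
      ∃ M : ℕ, ∀ m ≥ M, ∃ w : ℕ → A, w m = w 0 ∧ ∀ i < m, (w i, w (i + 1)) ∈ R) := by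
  have hR : LocallyAbsorbsEq n R := fun C hC hCR =>
    (habs C hC hCR).imp fun _ ht => ⟨ht.1, ht.2.2⟩
  have hn0 : 0 < n := by omega
  have ha : IsWalk R a (n - 1) := fun i hi => hwa i (by omega)
  refine ⟨fun m hm => ?_, ?_⟩
  · obtain ⟨w, hw0, -, hw⟩ := ha.exists_of_le hR hn0 le_rfl hm
    exact ⟨w, hw0, hw⟩
  · rintro ⟨c, p, hp, hcp, hc⟩
    have hwound : IsWalk R (fun i => c (i % p)) (p * n) := IsWalk.mod_of_closed hp hcp hc _
    refine ⟨p * n, fun m hm => ?_⟩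
    obtain ⟨w, hw0, hwm, hw⟩ :=
      hwound.exists_of_le hR hn0 (by nlinarith [Nat.sub_le n 1]) hm
    exact ⟨w, by simp only [hwm, hw0, Nat.mul_mod_right, Nat.zero_mod], hw⟩
end

section
/- Let A be an idempotent algebra and R ≤ A² nonempty, symmetric, without a loop, and suppose R locally n-absorbs the equality relation =_A. Then R contains no n-element clique (that is, there are no pairwise R-related distinct elements a₁, ..., a_n). -/
/-- A nonempty symmetric loopless relation that locally `n`-absorbs equality (via
idempotent operations preserving it) contains no `n`-element clique. -/
theorem stmt_9 {A : Type*} (n : ℕ) (hn : 2 ≤ n) (R : Set (A × A))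
    (hne : R.Nonempty)
    (hsym : ∀ a b : A, (a, b) ∈ R → (b, a) ∈ R)
    (hnoloop : ∀ a : A, (a, a) ∉ R)
    (habs : ∀ C : Set (Fin n → A × A), C.Finite →
      (∀ c ∈ C, ∃ i : Fin n, (c i).1 = (c i).2 ∧ ∀ j : Fin n, j ≠ i → c j ∈ R) →
      ∃ t : (Fin n → A) → A,
        (∀ a : A, t (fun _ => a) = a) ∧
        (∀ ab : Fin n → A × A, (∀ i, ab i ∈ R) →
          (t (fun i => (ab i).1), t (fun i => (ab i).2)) ∈ R) ∧
        (∀ c ∈ C, (t (fun i => (c i).1), t (fun i => (c i).2)) ∈ R)) :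
    ¬ ∃ a : Fin n → A, Function.Injective a ∧ ∀ i j : Fin n, i ≠ j → (a i, a j) ∈ R := by
  rintro ⟨a, -, hcl⟩
  have hcond : ∀ c ∈ Set.range (fun k : Fin n => fun i : Fin n => (a i, a k)),
      ∃ i : Fin n, (c i).1 = (c i).2 ∧ ∀ j : Fin n, j ≠ i → c j ∈ R := by
    rintro c ⟨k, rfl⟩
    exact ⟨k, rfl, fun j hj => hcl j k hj⟩
  obtain ⟨t, hid, hpres, hC⟩ := habs _ (Set.finite_range _) hcond
  have hb : ∀ k : Fin n, (t a, a k) ∈ R := by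
    intro k
    have := hC _ ⟨k, rfl⟩
    simpa [hid] using this
  have hloop : (t (fun _ => t a), t (fun i => a i)) ∈ R :=
    hpres (fun i => (t a, a i)) (fun i => hb i)
  rw [hid] at hloop
  exact hnoloop _ hloop
end

section
/- Let A be an idempotent algebra and R ≤ A² a nonempty symmetric subalgebra that locally n-absorbs the equality relation. Then R contains a closed walk of odd length. -/
/-- A nonempty symmetric relation that locally `n`-absorbs equality (via idempotent
operations preserving it) contains a closed walk of odd length. -/
theorem stmt_10 {A : Type*} (n : ℕ) (hn : 2 ≤ n) (R : Set (A × A))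
    (hne : R.Nonempty)
    (hsym : ∀ a b : A, (a, b) ∈ R → (b, a) ∈ R)
    (habs : ∀ C : Set (Fin n → A × A), C.Finite →
      (∀ c ∈ C, ∃ i : Fin n, (c i).1 = (c i).2 ∧ ∀ j : Fin n, j ≠ i → c j ∈ R) →
      ∃ t : (Fin n → A) → A,
        (∀ a : A, t (fun _ => a) = a) ∧
        (∀ ab : Fin n → A × A, (∀ i, ab i ∈ R) →
          (t (fun i => (ab i).1), t (fun i => (ab i).2)) ∈ R) ∧
        (∀ c ∈ C, (t (fun i => (c i).1), t (fun i => (c i).2)) ∈ R)) :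
    ∃ (m : ℕ) (w : ℕ → A), w (2 * m + 1) = w 0 ∧
      ∀ i < 2 * m + 1, (w i, w (i + 1)) ∈ R := by
  obtain ⟨⟨a, b⟩, hab⟩ := hne
  set s : ℕ → A := fun k => if k % 2 = 0 then a else b with hs
  have hedge : ∀ k, (s k, s (k + 1)) ∈ R := by
    intro k
    rcases Nat.even_or_odd k with hk | hk
    · have h1 : k % 2 = 0 := Nat.even_iff.mp hk
      have h2 : (k + 1) % 2 = 1 := by omega
      simpa [hs, h1, h2] using hab
    · have h1 : k % 2 = 1 := Nat.odd_iff.mp hk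
      have h2 : (k + 1) % 2 = 0 := by omega
      simpa [hs, h1, h2] using hsym a b hab
  set h : ℕ → Fin n → A := fun i j => if (j : ℕ) < i then s (i - 1) else s i with hh
  set C : Set (Fin n → A × A) :=
    (fun i : ℕ => fun j : Fin n => (h i j, h (i + 1) j)) '' (Set.Iio n) with hC
  have hCfin : C.Finite := (Set.finite_Iio n).image _
  have hcond : ∀ c ∈ C, ∃ i : Fin n, (c i).1 = (c i).2 ∧ ∀ j : Fin n, j ≠ i → c j ∈ R := by
    rintro c ⟨i, hi, rfl⟩
    simp only [Set.mem_Iio] at hi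
    refine ⟨⟨i, hi⟩, ?_, ?_⟩
    · simp [hh]
    · intro j hj
      have hji : (j : ℕ) ≠ i := fun hc => hj (Fin.ext hc)
      rcases lt_or_gt_of_ne hji with hlt | hgt
      · have hi1 : 1 ≤ i := by omega
        have h1 : h i j = s (i - 1) := by simp [hh, hlt]
        have h2 : h (i + 1) j = s i := by
          have : (j : ℕ) < i + 1 := by omega
          simp [hh, this]
        have := hedge (i - 1)
        have heq : i - 1 + 1 = i := by omega
        rw [heq] at this
        simpa [h1, h2] using this
      · have h1 : h i j = s i := by simp [hh, not_lt.mpr (le_of_lt hgt)]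
        have h2 : h (i + 1) j = s (i + 1) := by
          have : ¬ (j : ℕ) < i + 1 := by omega
          simp [hh, this]
        simpa [h1, h2] using hedge i
  obtain ⟨t, hid, hpres, habsC⟩ := habs C hCfin hcond
  refine ⟨n / 2, fun i => t (h i), ?_, ?_⟩
  · have hL : n ≤ 2 * (n / 2) + 1 := by omega
    have e1 : h (2 * (n / 2) + 1) = fun _ => s (2 * (n / 2)) := by
      funext j
      have : (j : ℕ) < 2 * (n / 2) + 1 := lt_of_lt_of_le j.isLt hL
      simp [hh, this]
    have e0 : h 0 = fun _ => s 0 := by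
      funext j
      simp [hh]
    have hsA : s (2 * (n / 2)) = s 0 := by
      have h1 : (2 * (n / 2)) % 2 = 0 := by omega
      simp [hs, h1]
    simp only [e1, e0, hid, hsA]
  · intro i hi
    by_cases hin : i < n
    · have hmem : (fun j : Fin n => (h i j, h (i + 1) j)) ∈ C :=
        ⟨i, Set.mem_Iio.mpr hin, rfl⟩
      exact habsC _ hmem
    · push_neg at hin
      have := hpres (fun j => (h i j, h (i + 1) j)) ?_
      · exact this
      · intro j
        have hj1 : (j : ℕ) < i := lt_of_lt_of_le j.isLt hin
        have hj2 : (j : ℕ) < i + 1 := by omega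
        have h1 : h i j = s (i - 1) := by simp [hh, hj1]
        have h2 : h (i + 1) j = s i := by simp [hh, hj2]
        have := hedge (i - 1)
        have heq : i - 1 + 1 = i := by omega
        rw [heq] at this
        simpa [h1, h2] using this
end

section
/- If R and S are binary relations on A and R locally n-absorbs S (with respect to a fixed algebra structure on A), then the inverse relation R⁻¹ locally n-absorbs S⁻¹, and the composition R ∘ R locally n-absorbs S ∘ S. -/
/-- `R` locally `n`-absorbs `S` with respect to a set `Ops` of (term) operations. -/
def LocallyAbsorbs {A : Type*} (n : ℕ) (Ops : Set ((Fin n → A) → A))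
    (R S : Set (A × A)) : Prop :=
  ∀ C : Set (Fin n → A × A), C.Finite →
    (∀ c ∈ C, ∃ i : Fin n, c i ∈ S ∧ ∀ j : Fin n, j ≠ i → c j ∈ R) →
    ∃ t ∈ Ops, ∀ c ∈ C, (t (fun i => (c i).1), t (fun i => (c i).2)) ∈ R

/-- If `R` locally `n`-absorbs `S`, then `R⁻¹` locally `n`-absorbs `S⁻¹` and
`R ∘ R` locally `n`-absorbs `S ∘ S`. -/
theorem stmt_11 {A : Type*} (n : ℕ) (Ops : Set ((Fin n → A) → A))
    (R S : Set (A × A)) (h : LocallyAbsorbs n Ops R S) :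
    LocallyAbsorbs n Ops {p : A × A | (p.2, p.1) ∈ R} {p : A × A | (p.2, p.1) ∈ S} ∧
    LocallyAbsorbs n Ops {p : A × A | ∃ b, (p.1, b) ∈ R ∧ (b, p.2) ∈ R}
      {p : A × A | ∃ b, (p.1, b) ∈ S ∧ (b, p.2) ∈ S} := by
  constructor
  · -- inverse
    intro C hC hmem
    obtain ⟨t, ht, hgood⟩ := h ((fun c => fun i => Prod.swap (c i)) '' C)
      (hC.image _)
      (by
        rintro _ ⟨c, hc, rfl⟩
        obtain ⟨i, hi, hj⟩ := hmem c hc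
        exact ⟨i, hi, fun j hji => hj j hji⟩)
    refine ⟨t, ht, fun c hc => ?_⟩
    exact hgood _ ⟨c, hc, rfl⟩
  · -- composition
    intro C hC hmem
    rcases Nat.eq_zero_or_pos n with hn | hn
    · have hCe : C = ∅ := by
        ext c; simp only [Set.mem_empty_iff_false, iff_false]
        intro hc
        obtain ⟨i, _⟩ := hmem c hc
        exact absurd i.2 (by omega)
      obtain ⟨t, ht, _⟩ := h ∅ Set.finite_empty (by simp)
      exact ⟨t, ht, by simp [hCe]⟩
    -- choose middle witnesses
    have hwit : ∀ c : Fin n → A × A, ∃ b : Fin n → A, ∃ i : Fin n, c ∈ C →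
        ((c i).1, b i) ∈ S ∧ (b i, (c i).2) ∈ S ∧
        ∀ j : Fin n, j ≠ i → ((c j).1, b j) ∈ R ∧ (b j, (c j).2) ∈ R := by
      intro c
      by_cases hc : c ∈ C
      case neg => exact ⟨fun _ => (c ⟨0, hn⟩).1, ⟨0, hn⟩, fun h => absurd h hc⟩
      obtain ⟨i, hi, hj⟩ := hmem c hc
      obtain ⟨bi, hbi1, hbi2⟩ := hi
      have : ∀ j : Fin n, ∃ b : A, j ≠ i → ((c j).1, b) ∈ R ∧ (b, (c j).2) ∈ R := by
        intro j
        by_cases hji : j = i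
        · exact ⟨bi, fun hne => absurd hji hne⟩
        · obtain ⟨b, hb1, hb2⟩ := hj j hji
          exact ⟨b, fun _ => ⟨hb1, hb2⟩⟩
      choose b hb using this
      refine ⟨Function.update b i bi, i, fun _ => ⟨?_, ?_, ?_⟩⟩
      · simp [hbi1]
      · simp [hbi2]
      · intro j hji
        simpa [Function.update_of_ne hji] using hb j hji
    choose b i hb using hwit
    have hbi1 : ∀ c ∈ C, ((c (i c)).1, b c (i c)) ∈ S := fun c hc => (hb c hc).1
    have hbi2 : ∀ c ∈ C, (b c (i c), (c (i c)).2) ∈ S := fun c hc => (hb c hc).2.1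
    have hbj : ∀ c ∈ C, ∀ j, j ≠ i c → ((c j).1, b c j) ∈ R ∧ (b c j, (c j).2) ∈ R :=
      fun c hc => (hb c hc).2.2
    set C' : Set (Fin n → A × A) :=
      ((fun c => fun k => ((c k).1, b c k)) '' C) ∪
      ((fun c => fun k => (b c k, (c k).2)) '' C) with hC'
    obtain ⟨t, ht, hgood⟩ := h C' ((hC.image _).union (hC.image _))
      (by
        rintro _ (⟨c, hc, rfl⟩ | ⟨c, hc, rfl⟩)
        · exact ⟨i c, hbi1 c hc, fun j hji => (hbj c hc j hji).1⟩
        · exact ⟨i c, hbi2 c hc, fun j hji => (hbj c hc j hji).2⟩)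
    refine ⟨t, ht, fun c hc => ?_⟩
    refine ⟨t (fun k => b c k), ?_, ?_⟩
    · exact hgood _ (Or.inl ⟨c, hc, rfl⟩)
    · exact hgood _ (Or.inr ⟨c, hc, rfl⟩)
end

section
/- For n > 2, let S_n be the algebra on the set {1, ..., n} whose operations are all unary operations together with all non-surjective finitary operations (the Słupecki clone). For m < n, the subuniverses of S_n^m are exactly the relations R_θ = {(a₁,...,a_m) : a_i = a_j whenever (i,j) ∈ θ} for equivalence relations θ on {1,...,m}. In particular, every such relation is preserved by every operation on {1,...,n}. -/
/-! Let `R ⊆ (α → β)` be a nonempty subuniverse. Since `|α| < |β|`, any tuple `(a i, b i)` of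
pairs takes fewer than `|β|` values, so it can be injectively recoded by a non-surjective binary
operation: `R` contains a tuple whose kernel is `ker a ⊓ ker b`. A tuple `s ∈ R` of minimal kernel therefore has
`ker s ≤ ker t` for all `t ∈ R`, and conversely every `t` with `ker s ≤ ker t` is `u ∘ s` for a
unary `u`. Hence `R = R_θ` for `θ = ker s`. -/

open Function

variable {α β : Type*}

/-- The relation `R_θ`. -/
def Setoid.constOnClasses (θ : Setoid α) (β : Type*) : Set (α → β) :=
  {t | ∀ i j, θ.r i j → t i = t j}

lemma Setoid.map_mem_constOnClasses {ι : Type*} (θ : Setoid α) (f : (ι → β) → β)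
    {ts : ι → α → β} (hts : ∀ j, ts j ∈ θ.constOnClasses β) :
    (fun i => f fun j => ts j i) ∈ θ.constOnClasses β :=
  fun i i' h => congrArg f (funext fun j => hts j i i' h)

def IsClosedUnderUnary (R : Set (α → β)) : Prop :=
  ∀ u : β → β, ∀ t ∈ R, u ∘ t ∈ R

def IsClosedUnderNonsurjective (R : Set (α → β)) : Prop :=
  ∀ (l : ℕ) (f : (Fin l → β) → β), ¬ Surjective f →
    ∀ ts : Fin l → α → β, (∀ j, ts j ∈ R) → (fun i => f fun j => ts j i) ∈ R

instance Setoid.instFinite [Finite α] : Finite (Setoid α) :=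
  Finite.of_injective (fun θ : Setoid α => ⇑θ) fun _ _ h => Setoid.ext fun x y => Iff.of_eq (congrFun (congrFun h x) y)

lemma exists_embedding_not_surjective [Fintype α] [Fintype β]
    (h : Fintype.card α < Fintype.card β) : ∃ e : α ↪ β, ¬ Surjective e := by
  obtain ⟨e⟩ := Function.Embedding.nonempty_of_card_le h.le
  exact ⟨e, fun he => (Fintype.card_le_of_surjective e he).not_gt h⟩

lemma IsClosedUnderNonsurjective.exists_ker_le_inf [Fintype α] [Fintype β]
    (h : Fintype.card α < Fintype.card β) {R : Set (α → β)} (hR : IsClosedUnderNonsurjective R)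
    {a b : α → β} (ha : a ∈ R) (hb : b ∈ R) :
    ∃ c ∈ R, Setoid.ker c ≤ Setoid.ker a ⊓ Setoid.ker b := by
  cases isEmpty_or_nonempty α
  · exact ⟨a, ha, fun i => isEmptyElim i⟩
  obtain ⟨e, he⟩ := exists_embedding_not_surjective h
  set g : α → β × β := fun i => (a i, b i)
  -- `e ∘ invFun g` recodes the pairs `g i` injectively, and misses every value outside `range e`.
  let f : (Fin 2 → β) → β := fun v => e (invFun g (v 0, v 1))
  have hf : ¬ Surjective f := fun hf => he fun y => (hf y).elim fun _ hv => ⟨_, hv⟩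
  refine ⟨_, hR 2 f hf ![a, b] (Fin.forall_fin_two.mpr ⟨ha, hb⟩), fun i j hij => ?_⟩
  have hg : g i = g j := by
    rw [← invFun_eq (⟨i, rfl⟩ : ∃ k, g k = g i), ← invFun_eq (⟨j, rfl⟩ : ∃ k, g k = g j)]
    exact congrArg g (e.injective hij)
  exact ⟨congrArg Prod.fst hg, congrArg Prod.snd hg⟩

lemma exists_ker_le_of_inf_closed [Finite α] {R : Set (α → β)} (hne : R.Nonempty)
    (hinf : ∀ a ∈ R, ∀ b ∈ R, ∃ c ∈ R, Setoid.ker c ≤ Setoid.ker a ⊓ Setoid.ker b) :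
    ∃ s ∈ R, ∀ t ∈ R, Setoid.ker s ≤ Setoid.ker t := by
  obtain ⟨_, ⟨s, hs, rfl⟩, hmin⟩ := (Set.toFinite (Setoid.ker '' R)).exists_minimal (hne.image _)
  refine ⟨s, hs, fun t ht => ?_⟩
  obtain ⟨c, hc, hcst⟩ := hinf s hs t ht
  exact (hmin ⟨c, hc, rfl⟩ (hcst.trans inf_le_left)).trans (hcst.trans inf_le_right)

lemma IsClosedUnderUnary.mem_of_ker_le {R : Set (α → β)} (hR : IsClosedUnderUnary R)
    {s t : α → β} (hs : s ∈ R) (hst : Setoid.ker s ≤ Setoid.ker t) : t ∈ R := by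
  have hfac : t.FactorsThrough s := fun _ _ h => hst h
  have hu : extend s t id ∘ s = t := funext fun i => hfac.extend_apply id i
  exact hu ▸ hR _ s hs

theorem isClosedUnderUnary_and_isClosedUnderNonsurjective_iff [Fintype α] [Fintype β]
    (h : Fintype.card α < Fintype.card β) {R : Set (α → β)} (hne : R.Nonempty) :
    IsClosedUnderUnary R ∧ IsClosedUnderNonsurjective R ↔
      ∃ θ : Setoid α, R = θ.constOnClasses β := by
  constructor
  · rintro ⟨hun, hop⟩
    obtain ⟨s, hs, hmin⟩ :=
      exists_ker_le_of_inf_closed hne fun a ha b hb => hop.exists_ker_le_inf h ha hb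
    exact ⟨Setoid.ker s, Set.ext fun t => ⟨hmin t, hun.mem_of_ker_le hs⟩⟩
  · rintro ⟨θ, rfl⟩
    exact ⟨fun u t ht i j hij => congrArg u (ht i j hij),
      fun _ f _ _ hts => θ.map_mem_constOnClasses f hts⟩

theorem stmt_12_general (n m : ℕ) (hm : m < n)
    (R : Set (Fin m → Fin n)) (hne : R.Nonempty) :
    (((∀ u : Fin n → Fin n, ∀ t ∈ R, (fun i => u (t i)) ∈ R) ∧
      (∀ (l : ℕ) (f : (Fin l → Fin n) → Fin n), ¬ Function.Surjective f →
        ∀ ts : Fin l → (Fin m → Fin n), (∀ j, ts j ∈ R) →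
          (fun i => f (fun j => ts j i)) ∈ R)) ↔
      (∃ θ : Setoid (Fin m), R = {t | ∀ i j : Fin m, θ.r i j → t i = t j})) ∧
    (∀ (θ : Setoid (Fin m)) (l : ℕ) (f : (Fin l → Fin n) → Fin n)
        (ts : Fin l → (Fin m → Fin n)),
      (∀ j, ts j ∈ {t : Fin m → Fin n | ∀ i i' : Fin m, θ.r i i' → t i = t i'}) →
      (fun i => f (fun j => ts j i)) ∈
        {t : Fin m → Fin n | ∀ i i' : Fin m, θ.r i i' → t i = t i'}) :=
  ⟨isClosedUnderUnary_and_isClosedUnderNonsurjective_iff (by simpa using hm) hne,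
    fun θ _ f _ hts => θ.map_mem_constOnClasses f hts⟩

/-- For `n > 2` and `m < n`, the nonempty subuniverses of the `m`-th power of the
Słupecki algebra on `Fin n` (closed under all unary and all non-surjective operations)
are exactly the relations `R_θ` determined by equivalence relations `θ` on `Fin m`;
moreover every such relation is preserved by every operation on `Fin n`. -/
theorem stmt_12 (n m : ℕ) (hn : 2 < n) (hm : m < n)
    (R : Set (Fin m → Fin n)) (hne : R.Nonempty) :
    (((∀ u : Fin n → Fin n, ∀ t ∈ R, (fun i => u (t i)) ∈ R) ∧
      (∀ (l : ℕ) (f : (Fin l → Fin n) → Fin n), ¬ Function.Surjective f →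
        ∀ ts : Fin l → (Fin m → Fin n), (∀ j, ts j ∈ R) →
          (fun i => f (fun j => ts j i)) ∈ R)) ↔
      (∃ θ : Setoid (Fin m), R = {t | ∀ i j : Fin m, θ.r i j → t i = t j})) ∧
    (∀ (θ : Setoid (Fin m)) (l : ℕ) (f : (Fin l → Fin n) → Fin n)
        (ts : Fin l → (Fin m → Fin n)),
      (∀ j, ts j ∈ {t : Fin m → Fin n | ∀ i i' : Fin m, θ.r i i' → t i = t i'}) →
      (fun i => f (fun j => ts j i)) ∈
        {t : Fin m → Fin n | ∀ i i' : Fin m, θ.r i i' → t i = t i'}) :=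
  stmt_12_general n m hm R hne
end

section
/- Let A be an idempotent algebra. If every subalgebra of A^{k+1} is uniquely determined by its projections onto all k-element subsets of coordinates, then for all a₁, ..., a_{k+1}, b₁, ..., b_{k+1} ∈ A there is a term operation t of A with t(b₁,a₁,...,a₁) = a₁, t(a₂,b₂,a₂,...,a₂) = a₂, ..., t(a_{k+1},...,a_{k+1},b_{k+1}) = a_{k+1}. (Consequently A has local near unanimity term operations of arity k+1.) -/
/-- If every subalgebra of `A^(k+1)` (subset closed under the idempotent clone `Clo`)
is determined by its projections onto `k`-element sets of coordinates, then for all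
tuples `a, b` there is a term operation `t` with `t(aᵢ,…,bᵢ at i,…,aᵢ) = aᵢ` for each
`i`. -/
theorem stmt_14 {A : Type*} {k : ℕ} (hk : 1 ≤ k)
    (Clo : ∀ m : ℕ, Set ((Fin m → A) → A))
    (hproj : ∀ (m : ℕ) (i : Fin m), (fun v : Fin m → A => v i) ∈ Clo m)
    (hcomp : ∀ (m l : ℕ) (f : (Fin l → A) → A), f ∈ Clo l →
      ∀ gs : Fin l → ((Fin m → A) → A), (∀ j, gs j ∈ Clo m) →
      (fun v => f (fun j => gs j v)) ∈ Clo m)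
    (hidem : ∀ (m : ℕ) (f : (Fin m → A) → A), f ∈ Clo m → ∀ a : A, f (fun _ => a) = a)
    (hdet : ∀ R : Set (Fin (k + 1) → A),
      (∀ (m : ℕ) (f : (Fin m → A) → A), f ∈ Clo m →
        ∀ ts : Fin m → (Fin (k + 1) → A), (∀ j, ts j ∈ R) →
        (fun i => f (fun j => ts j i)) ∈ R) →
      ∀ a : Fin (k + 1) → A,
        (∀ I : Finset (Fin (k + 1)), I.card = k → ∃ b ∈ R, ∀ i ∈ I, b i = a i) →
        a ∈ R) :
    ∀ a b : Fin (k + 1) → A, ∃ t ∈ Clo (k + 1),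
      ∀ i : Fin (k + 1), t (fun j => if j = i then b i else a i) = a i := by
  intro a b
  -- generator tuples: gen j is a with b j at coordinate j
  set gen : Fin (k + 1) → Fin (k + 1) → A :=
    fun j i => if j = i then b i else a i with hgen
  -- R: the subalgebra generated by the gen j
  set R : Set (Fin (k + 1) → A) :=
    {c | ∃ t ∈ Clo (k + 1), ∀ i, c i = t (fun j => gen j i)} with hR
  have hclosed : ∀ (m : ℕ) (f : (Fin m → A) → A), f ∈ Clo m →
      ∀ ts : Fin m → (Fin (k + 1) → A), (∀ j, ts j ∈ R) →
      (fun i => f (fun j => ts j i)) ∈ R := by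
    intro m f hf ts hts
    choose u hu huv using hts
    refine ⟨fun v => f (fun j => u j v), hcomp _ _ f hf u hu, ?_⟩
    intro i
    simp only []
    congr 1
    funext j
    exact huv j i
  have hgenR : ∀ j, gen j ∈ R := by
    intro j
    exact ⟨fun v => v j, hproj _ j, fun i => rfl⟩
  have haR : a ∈ R := by
    refine hdet R hclosed a ?_
    intro I hI
    have : ∃ i₀, i₀ ∉ I := by
      by_contra h
      push_neg at h
      have : I = Finset.univ := Finset.eq_univ_iff_forall.mpr h
      simp [this] at hI
    obtain ⟨i₀, hi₀⟩ := this
    refine ⟨gen i₀, hgenR i₀, ?_⟩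
    intro i hi
    have : i₀ ≠ i := fun h => hi₀ (h ▸ hi)
    simp [hgen, this]
  obtain ⟨t, ht, htv⟩ := haR
  refine ⟨t, ht, fun i => ?_⟩
  have := htv i
  have hgeni : (fun j => gen j i) = (fun j => if j = i then b i else a i) := by
    funext j; simp [hgen]
  rw [hgeni] at this
  exact this.symm
end

section
/- Let A be an algebra with local near unanimity term operations of arity k+1. Then for every r > k, every subalgebra R of A^r is uniquely determined by its projections onto all k-element subsets of coordinates: if a ∈ A^r agrees with some element of R on every k-element set of coordinates, then a ∈ R. -/
/-!
Baker–Pixley style argument. By induction on `m ≥ k`, `a` agrees with an element of `R` on every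
`m`-element set `I` of coordinates. For `|I| = m + 1 > k`, pick `k + 1` distinct coordinates
`e 0, …, e k` in `I` and witnesses `b j ∈ R` agreeing with `a` on `I \ {e j}`. At each coordinate of
`I` at most one `b j` deviates from `a`, so a near unanimity operation for the finitely many entries
involved, applied coordinatewise to the `b j`, returns an element of `R` agreeing with `a` on `I`.
-/

open Function

section NearUnanimity

variable {A ι : Type*} {n : ℕ}

def IsNearUnanimityOn (f : (Fin n → A) → A) (S : Set A) : Prop :=
  ∀ a ∈ S, ∀ b ∈ S, ∀ i : Fin n, f (fun j => if j = i then b else a) = a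

def HasLocalNearUnanimity (Clo : Set ((Fin n → A) → A)) : Prop :=
  ∀ S : Finset A, ∃ f ∈ Clo, IsNearUnanimityOn f S

def PreservesCoordinatewise (Clo : Set ((Fin n → A) → A)) (R : Set (ι → A)) : Prop :=
  ∀ f ∈ Clo, ∀ ts : Fin n → ι → A, (∀ j, ts j ∈ R) → (fun c => f fun j => ts j c) ∈ R

def MemOnCoords (R : Set (ι → A)) (a : ι → A) (I : Finset ι) : Prop :=
  ∃ b ∈ R, Set.EqOn b a I

theorem IsNearUnanimityOn.apply_eq_of_forall_ne {f : (Fin n → A) → A} {S : Set A}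
    (hf : IsNearUnanimityOn f S) {x : Fin n → A} {a : A} (ha : a ∈ S) (hx : ∀ j, x j ∈ S)
    (i : Fin n) (hxa : ∀ j ≠ i, x j = a) : f x = a := by
  have hx_eq : x = fun j => if j = i then x i else a := by
    funext j
    split_ifs with h
    · rw [h]
    · exact hxa j h
  rw [hx_eq]
  exact hf a ha (x i) (hx i) i

theorem Function.Injective.exists_forall_ne_apply_ne {α β : Type*} [Nonempty α] {e : α → β}
    (he : Injective e) (c : β) : ∃ i, ∀ j ≠ i, e j ≠ c := by
  by_cases h : ∃ i, e i = c
  · obtain ⟨i, rfl⟩ := h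
    exact ⟨i, fun j hji hj => hji (he hj)⟩
  · exact ⟨Classical.arbitrary α, fun j _ hj => h ⟨j, hj⟩⟩

variable {k : ℕ} {Clo : Set ((Fin (k + 1) → A) → A)} {R : Set (ι → A)} {a : ι → A}

theorem memOnCoords_of_forall_erase [DecidableEq ι] (hnu : HasLocalNearUnanimity Clo)
    (hR : PreservesCoordinatewise Clo R) {I : Finset ι} (hI : k + 1 ≤ I.card)
    (herase : ∀ i ∈ I, MemOnCoords R a (I.erase i)) : MemOnCoords R a I := by
  classical
  let e : Fin (k + 1) ↪ ι :=
    ((Fin.castLEEmb hI).trans I.equivFin.symm.toEmbedding).trans (Embedding.subtype _)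
  have he_mem (j : Fin (k + 1)) : e j ∈ I := (I.equivFin.symm _).2
  choose b hbR hba using fun j => herase (e j) (he_mem j)
  obtain ⟨f, hfClo, hf⟩ :=
    hnu ((Finset.univ ×ˢ I).image (fun p => b p.1 p.2) ∪ I.image a)
  refine ⟨fun c => f fun j => b j c, hR f hfClo b hbR, fun c hc => ?_⟩
  obtain ⟨i, hi⟩ := e.injective.exists_forall_ne_apply_ne c
  refine hf.apply_eq_of_forall_ne ?_ (fun j => ?_) i fun j hj => ?_
  · exact Finset.mem_union_right _ (Finset.mem_image_of_mem a hc)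
  · exact Finset.mem_union_left _ <| Finset.mem_image_of_mem (fun p => b p.1 p.2) (a := (j, c))
      (Finset.mem_product.2 ⟨Finset.mem_univ j, hc⟩)
  · exact hba j (Finset.mem_erase.2 ⟨(hi j hj).symm, hc⟩)

theorem memOnCoords_of_card_eq_add (hnu : HasLocalNearUnanimity Clo)
    (hR : PreservesCoordinatewise Clo R)
    (hk : ∀ I : Finset ι, I.card = k → MemOnCoords R a I) (m : ℕ) :
    ∀ I : Finset ι, I.card = k + m → MemOnCoords R a I := by
  classical
  induction m with
  | zero => exact hk
  | succ m ih =>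
    intro I hI
    refine memOnCoords_of_forall_erase hnu hR (by omega) fun i hi => ih _ ?_
    rw [Finset.card_erase_of_mem hi, hI]
    rfl

theorem mem_of_forall_card_eq [Fintype ι] (hkι : k ≤ Fintype.card ι)
    (hnu : HasLocalNearUnanimity Clo) (hR : PreservesCoordinatewise Clo R)
    (hk : ∀ I : Finset ι, I.card = k → MemOnCoords R a I) : a ∈ R := by
  obtain ⟨b, hbR, hba⟩ := memOnCoords_of_card_eq_add hnu hR hk (Fintype.card ι - k)
    Finset.univ (by rw [Finset.card_univ]; omega)
  rwa [show b = a from funext fun i => hba (Finset.mem_coe.2 (Finset.mem_univ i))] at hbR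

end NearUnanimity

/-- If `A` has local near unanimity term operations of arity `k+1`, then every
subalgebra of `A^r` (`r > k`) is determined by its projections onto `k`-element
subsets of coordinates. -/
theorem stmt_15 {A : Type*} {k r : ℕ} (hr : k < r)
    (Clo : Set ((Fin (k + 1) → A) → A))
    (hlocnu : ∀ S : Finset A, ∃ nS ∈ Clo, ∀ a ∈ S, ∀ b ∈ S, ∀ i : Fin (k + 1),
      nS (fun j => if j = i then b else a) = a)
    (R : Set (Fin r → A))
    (hclosed : ∀ f ∈ Clo, ∀ ts : Fin (k + 1) → (Fin r → A),
      (∀ j, ts j ∈ R) → (fun c => f (fun j => ts j c)) ∈ R)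
    (a : Fin r → A)
    (ha : ∀ I : Finset (Fin r), I.card = k → ∃ b ∈ R, ∀ i ∈ I, b i = a i) :
    a ∈ R :=
  mem_of_forall_card_eq (by simpa using hr.le) hlocnu hclosed ha
end

section
/- Let k > 1 and let A be an algebra such that in every (k,k+1)-instance over A² on k+2 variables, every partial solution extends to a solution. Then for every subalgebra R ≤ A^{k+1} and every tuple b ∈ A^{k+1} whose projection onto each k-element coordinate set belongs to the corresponding projection of R, one has b ∈ R. -/
/-- If in every `(k,k+1)`-instance over `A²` on `k+2` variables every partial solution
extends to a solution, then every subalgebra of `A^(k+1)` is determined by its `k`-ary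
projections. -/
theorem stmt_18 {A : Type*} {k : ℕ} (hk : 1 < k)
    (F : ∀ m : ℕ, Set ((Fin m → A) → A))
    (hinst : ∀ Rel : Finset (Fin (k + 2)) → Set (Fin (k + 2) → A × A),
      -- constraints depend only on their scope
      (∀ S : Finset (Fin (k + 2)), S.card = k → ∀ f g : Fin (k + 2) → A × A,
        (∀ x ∈ S, f x = g x) → f ∈ Rel S → g ∈ Rel S) →
      -- constraint relations are subalgebras of powers of A²
      (∀ S : Finset (Fin (k + 2)), S.card = k → ∀ (m : ℕ), ∀ op ∈ F m,
        ∀ ts : Fin m → (Fin (k + 2) → A × A), (∀ j, ts j ∈ Rel S) →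
        (fun x => (op (fun j => (ts j x).1), op (fun j => (ts j x).2))) ∈ Rel S) →
      -- the (k,k+1)-condition
      (∀ W : Finset (Fin (k + 2)), W.card = k + 1 → ∀ S ⊆ W, S.card = k →
        ∀ f ∈ Rel S, ∃ g : Fin (k + 2) → A × A,
          (∀ x ∈ S, g x = f x) ∧ ∀ S' ⊆ W, S'.card = k → g ∈ Rel S') →
      -- every partial solution extends to a solution
      ∀ (W : Finset (Fin (k + 2))) (f : Fin (k + 2) → A × A),
        (∀ S ⊆ W, S.card = k → f ∈ Rel S) →
        ∃ g : Fin (k + 2) → A × A, (∀ x ∈ W, g x = f x) ∧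
          ∀ S : Finset (Fin (k + 2)), S.card = k → g ∈ Rel S)
    (R : Set (Fin (k + 1) → A))
    (hclosedR : ∀ (m : ℕ), ∀ op ∈ F m, ∀ ts : Fin m → (Fin (k + 1) → A),
      (∀ j, ts j ∈ R) → (fun i => op (fun j => ts j i)) ∈ R)
    (b : Fin (k + 1) → A)
    (hb : ∀ I : Finset (Fin (k + 1)), I.card = k → ∃ c ∈ R, ∀ i ∈ I, c i = b i) :
    b ∈ R := by
    classical
  set y : Fin (k + 2) := Fin.last (k + 1) with hy
  -- the "valuation" induced by r ∈ A^{k+1}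
  set val : (Fin (k + 1) → A) → (Fin (k + 2) → A × A) :=
    fun r x => if h : (x : ℕ) < k + 1 then (r ⟨x, h⟩, r ⟨x, h⟩) else (r 0, r 1) with hval
  have val_cast : ∀ (r : Fin (k + 1) → A) (i : Fin (k + 1)),
      val (r) (Fin.castSucc i) = (r i, r i) := by
    intro r i
    simp only [hval]
    rw [dif_pos (by simpa using i.isLt)]
    have hi : (⟨((Fin.castSucc i : Fin (k + 2)) : ℕ), by simpa using i.isLt⟩ : Fin (k + 1)) = i :=
      Fin.ext (by simp)
    rw [hi]
  have val_lt : ∀ (r : Fin (k + 1) → A) (x : Fin (k + 2)) (h : (x : ℕ) < k + 1),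
      val r x = (r ⟨x, h⟩, r ⟨x, h⟩) := by
    intro r x h
    simp only [hval]
    rw [dif_pos h]
  have val_y : ∀ r : Fin (k + 1) → A, val r y = (r 0, r 1) := by
    intro r
    simp only [hval, hy]
    rw [dif_neg (by simp [Fin.last])]
  have ne_y_lt : ∀ x : Fin (k + 2), x ≠ y → (x : ℕ) < k + 1 := by
    intro x hx
    have := x.isLt
    rcases lt_or_eq_of_le (Nat.lt_succ_iff.mp this) with h | h
    · exact h
    · exact absurd (Fin.ext h) hx
  set Rel : Finset (Fin (k + 2)) → Set (Fin (k + 2) → A × A) :=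
    fun S => {f | ∃ r ∈ R, ∀ x ∈ S, f x = val r x} with hRel
  -- scope condition
  have h1 : ∀ S : Finset (Fin (k + 2)), S.card = k → ∀ f g : Fin (k + 2) → A × A,
      (∀ x ∈ S, f x = g x) → f ∈ Rel S → g ∈ Rel S := by
    rintro S _ f g hfg ⟨r, hr, hc⟩
    exact ⟨r, hr, fun x hx => (hfg x hx) ▸ hc x hx⟩
  -- subalgebra condition
  have h2 : ∀ S : Finset (Fin (k + 2)), S.card = k → ∀ (m : ℕ), ∀ op ∈ F m,
      ∀ ts : Fin m → (Fin (k + 2) → A × A), (∀ j, ts j ∈ Rel S) →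
      (fun x => (op (fun j => (ts j x).1), op (fun j => (ts j x).2))) ∈ Rel S := by
    intro S _ m op hop ts hts
    choose r hrR hrc using hts
    refine ⟨fun i => op (fun j => r j i), hclosedR m op hop r hrR, ?_⟩
    intro x hx
    by_cases h : (x : ℕ) < k + 1
    · have : ∀ j, ts j x = (r j ⟨x, h⟩, r j ⟨x, h⟩) := by
        intro j
        rw [hrc j x hx]; simp only [hval]; rw [dif_pos h]
      simp only [hval]
      rw [dif_pos h]
      simp only [this]
    · have : ∀ j, ts j x = (r j 0, r j 1) := by
        intro j
        rw [hrc j x hx]; simp only [hval]; rw [dif_neg h]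
      simp only [hval]
      rw [dif_neg h]
      simp only [this]
  -- (k,k+1) condition
  have h3 : ∀ W : Finset (Fin (k + 2)), W.card = k + 1 → ∀ S ⊆ W, S.card = k →
      ∀ f ∈ Rel S, ∃ g : Fin (k + 2) → A × A,
        (∀ x ∈ S, g x = f x) ∧ ∀ S' ⊆ W, S'.card = k → g ∈ Rel S' := by
    rintro W _ S _ _ f ⟨r, hr, hc⟩
    exact ⟨val r, fun x hx => (hc x hx).symm, fun S' _ _ => ⟨r, hr, fun x _ => rfl⟩⟩
  -- partial solution on W = all x-variables
  set W : Finset (Fin (k + 2)) := Finset.univ.erase y with hW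
  have hpart : ∀ S ⊆ W, S.card = k → val b ∈ Rel S := by
    intro S hSW hScard
    set I : Finset (Fin (k + 1)) :=
      S.preimage Fin.castSucc ((Fin.castSucc_injective _).injOn) with hI
    have hmemI : ∀ i : Fin (k + 1), i ∈ I ↔ Fin.castSucc i ∈ S := by
      intro i; simp [hI, Finset.mem_preimage]
    have himage : I.image Fin.castSucc = S := by
      ext x
      simp only [Finset.mem_image]
      constructor
      · rintro ⟨i, hi, rfl⟩; exact (hmemI i).mp hi
      · intro hx
        have hxy : x ≠ y := by
          intro h
          have hxW := hSW hx
          rw [hW, h] at hxW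
          exact Finset.notMem_erase _ _ hxW
        have hlt := ne_y_lt x hxy
        have hcx : Fin.castSucc (⟨(x : ℕ), hlt⟩ : Fin (k + 1)) = x := Fin.ext rfl
        exact ⟨⟨x, hlt⟩, (hmemI _).mpr (by rw [hcx]; exact hx), hcx⟩

    have hIcard : I.card = k := by
      rw [← himage] at hScard
      rwa [Finset.card_image_of_injective _ (Fin.castSucc_injective _)] at hScard
    obtain ⟨c, hcR, hcb⟩ := hb I hIcard
    refine ⟨c, hcR, ?_⟩
    intro x hx
    have hxy : x ≠ y := by
      intro h
      have hxW := hSW hx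
      rw [hW, h] at hxW
      exact Finset.notMem_erase _ _ hxW
    have hlt := ne_y_lt x hxy
    have hcx : Fin.castSucc (⟨(x : ℕ), hlt⟩ : Fin (k + 1)) = x := Fin.ext rfl
    have hiI : (⟨(x : ℕ), hlt⟩ : Fin (k + 1)) ∈ I := (hmemI _).mpr (by rw [hcx]; exact hx)
    rw [val_lt b x hlt, val_lt c x hlt, hcb _ hiI]
  obtain ⟨g, hgW, hgS⟩ := hinst Rel h1 h2 h3 W (val b) hpart
  have hgx : ∀ i : Fin (k + 1), g (Fin.castSucc i) = (b i, b i) := by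
    intro i
    have hne : (Fin.castSucc i : Fin (k + 2)) ≠ y := by
      intro h
      have h' : ((Fin.castSucc i : Fin (k + 2)) : ℕ) = k + 1 := by rw [h, hy]; rfl
      simp at h'
      omega
    have hmem : Fin.castSucc i ∈ W := by
      rw [hW]
      exact Finset.mem_erase.mpr ⟨hne, Finset.mem_univ _⟩
    rw [hgW _ hmem, val_cast]
  -- key: for distinct p q, get witness r
  have key : ∀ p q : Fin (k + 1), p ≠ q → ∃ r ∈ R,
      (r 0, r 1) = g y ∧ ∀ i : Fin (k + 1), i ≠ p → i ≠ q → r i = b i := by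
    intro p q hpq
    set D : Finset (Fin (k + 2)) :=
      insert y (((Finset.univ.erase p).erase q).image Fin.castSucc) with hD
    have hynotin : y ∉ ((Finset.univ.erase p).erase q).image Fin.castSucc := by
      intro hmem
      obtain ⟨i, -, h⟩ := Finset.mem_image.mp hmem
      have h' : (i : ℕ) = k + 1 := by
        have := congrArg Fin.val h
        simpa [hy] using this
      have := i.isLt
      omega
    have hDcard : D.card = k := by
      rw [hD, Finset.card_insert_of_notMem hynotin,
        Finset.card_image_of_injective _ (Fin.castSucc_injective _),
        Finset.card_erase_of_mem (by simp [Finset.mem_erase, hpq.symm]),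
        Finset.card_erase_of_mem (Finset.mem_univ p)]
      simp; omega
    obtain ⟨r, hrR, hrc⟩ := hgS D hDcard
    refine ⟨r, hrR, ?_, ?_⟩
    · have := hrc y (by simp [hD])
      rw [val_y] at this
      exact this.symm
    · intro i hip hiq
      have hmem : Fin.castSucc i ∈ D := by
        rw [hD]
        apply Finset.mem_insert_of_mem
        exact Finset.mem_image_of_mem _ (by simp [Finset.mem_erase, hip, hiq])
      have := hrc _ hmem
      rw [val_cast, hgx i] at this
      exact (Prod.ext_iff.mp this).1.symm
  -- three distinct indices 0, 1, 2 in Fin (k+1)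
  have h3le : 3 ≤ k + 1 := by omega
  have hv1 : ((1 : Fin (k + 1)) : ℕ) = 1 := by
    have h' : ((1 : Fin (k + 1)) : ℕ) = 1 % (k + 1) := rfl
    rw [h']; exact Nat.mod_eq_of_lt (by omega)
  have hv2 : ((2 : Fin (k + 1)) : ℕ) = 2 := by
    have h' : ((2 : Fin (k + 1)) : ℕ) = 2 % (k + 1) := rfl
    rw [h']; exact Nat.mod_eq_of_lt (by omega)
  have h01 : (0 : Fin (k + 1)) ≠ 1 := by
    intro h; have := congrArg Fin.val h; rw [Fin.val_zero, hv1] at this; omega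
  have h02 : (0 : Fin (k + 1)) ≠ 2 := by
    intro h; have := congrArg Fin.val h; rw [Fin.val_zero, hv2] at this; omega
  have h12 : (1 : Fin (k + 1)) ≠ 2 := by
    intro h; have := congrArg Fin.val h; rw [hv1, hv2] at this; omega
  obtain ⟨r1, -, hr1y, hr1b⟩ := key 1 2 h12
  obtain ⟨r2, -, hr2y, hr2b⟩ := key 0 2 h02
  obtain ⟨r3, hr3R, hr3y, hr3b⟩ := key 0 1 h01
  have hgy1 : (g y).1 = b 0 := by
    rw [← hr1y]; exact (hr1b 0 h01 h02)
  have hgy2 : (g y).2 = b 1 := by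
    rw [← hr2y]; exact (hr2b 1 h01.symm h12)
  have : r3 = b := by
    funext i
    by_cases h0 : i = 0
    · subst h0
      have := congrArg Prod.fst hr3y
      simpa [hgy1] using this
    · by_cases h1 : i = 1
      · subst h1
        have := congrArg Prod.snd hr3y
        simpa [hgy2] using this
      · exact hr3b i h0 h1
  exact this ▸ hr3R
end
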